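/- arXiv:1609.02827 — 3 statements merged into one kernel-verified Lean document; each statement's English description precedes it below -/
import Mathlib

section
/- Let $a > 0$, $b > 0$, $\xi \geq 0$, and let $n$ be a non-negative integer. Define $c_n(a,b) = \int_0^{+\infty} (\tau+\xi)^{b-1} \tau^n e^{-a\tau} \, d\tau$. Then $a\, c_{n+1}(a,b) = (n+b)\, c_n(a,b) + \xi(1-b)\, c_n(a,b-1)$. -/
/-!
Integrate the derivative of `(τ + ξ)^(b-1) τ^(n+1) e^(-aτ)` over `(0, ∞)`: the boundary terms
vanish (the factor `τ^(n+1)` at `0`, the exponential at `∞`), which gives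
`(b - 1) ∫ (τ+ξ)^(b-2) τ^(n+1) e^(-aτ) + (n + 1) c_n(a,b) - a c_(n+1)(a,b) = 0`.
Writing `τ = (τ + ξ) - ξ` turns the first integral into `c_n(a,b) - ξ c_n(a,b-1)`.
-/

open Real MeasureTheory Set Filter Topology Asymptotics

namespace ShiftedGamma

/-- The integrand of `c_m(a, β)`. -/
noncomputable def kernel (a ξ β : ℝ) (m : ℕ) (τ : ℝ) : ℝ :=
  (τ + ξ) ^ (β - 1) * τ ^ m * exp (-a * τ)

variable {a ξ β : ℝ} {m : ℕ} {τ : ℝ}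

lemma continuousAt_kernel (h : τ + ξ ≠ 0) : ContinuousAt (kernel a ξ β m) τ := by
  unfold kernel
  fun_prop (disch := exact Or.inl h)

lemma kernel_zero_shift (hτ : 0 < τ) :
    kernel a 0 β m τ = τ ^ ((m : ℝ) + β - 1) * exp (-a * τ) := by
  rw [kernel, add_zero, ← rpow_natCast, ← rpow_add hτ, sub_add_eq_add_sub, add_comm β]

lemma tendsto_kernel_atTop (ha : 0 < a) : Tendsto (kernel a ξ β m) atTop (𝓝 0) := by
  have hshift : Tendsto (fun τ : ℝ => (τ + ξ) ^ (β - 1) * exp (-(a / 2) * (τ + ξ)))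
      atTop (𝓝 0) :=
    (tendsto_rpow_mul_exp_neg_mul_atTop_nhds_zero (β - 1) (a / 2) (by linarith)).comp
      (tendsto_atTop_add_const_right _ ξ tendsto_id)
  have hpow : Tendsto (fun τ : ℝ => τ ^ (m : ℝ) * exp (-(a / 2) * τ)) atTop (𝓝 0) :=
    tendsto_rpow_mul_exp_neg_mul_atTop_nhds_zero _ _ (by linarith)
  have := (hshift.mul hpow).const_mul (exp (a / 2 * ξ))
  rw [mul_zero, mul_zero] at this
  refine this.congr fun τ => ?_
  -- `e^(aξ/2) e^(-a(τ+ξ)/2) e^(-aτ/2) = e^(-aτ)`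
  rw [kernel, rpow_natCast, mul_mul_mul_comm, ← mul_assoc, mul_comm (exp _),
    mul_assoc _ (exp _), ← exp_add, ← exp_add]
  ring_nf

lemma kernel_isBigO_exp_neg (ha : 0 < a) :
    kernel a ξ β m =O[atTop] fun τ => exp (-(a / 2) * τ) := by
  have h := ((tendsto_kernel_atTop (ξ := ξ) (β := β) (m := m) (half_pos ha)).isBigO_one ℝ).mul
    (isBigO_refl (fun τ : ℝ => exp (-(a / 2) * τ)) atTop)
  simp only [one_mul] at h
  refine h.congr_left fun τ => ?_
  rw [kernel, kernel, mul_assoc, ← exp_add]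
  ring_nf

lemma integrableOn_kernel (ha : 0 < a) (hξ : 0 ≤ ξ) (h : 0 < (m : ℝ) + β ∨ 0 < ξ) :
    IntegrableOn (kernel a ξ β m) (Ioi 0) := by
  rcases hξ.eq_or_lt with rfl | hξ
  · have hmβ : 0 < (m : ℝ) + β := h.resolve_right (lt_irrefl 0)
    refine (integrableOn_rpow_mul_exp_neg_mul_rpow (s := (m : ℝ) + β - 1) (by linarith) one_pos
      ha).congr_fun (fun τ hτ => ?_) measurableSet_Ioi
    rw [kernel_zero_shift hτ]
    simp only [rpow_one]
  · exact integrable_of_isBigO_exp_neg (half_pos ha)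
      (fun τ hτ => (continuousAt_kernel (by linarith [mem_Ici.mp hτ])).continuousWithinAt)
      (kernel_isBigO_exp_neg ha)

lemma kernel_sub_one_succ (h : τ + ξ ≠ 0) :
    kernel a ξ (β - 1) (m + 1) τ = kernel a ξ β m τ - ξ * kernel a ξ (β - 1) m τ := by
  have hsucc : (τ + ξ) ^ (β - 1) = (τ + ξ) ^ (β - 1 - 1) * (τ + ξ) := by
    rw [← rpow_add_one h, sub_add_cancel]
  simp only [kernel, hsucc, pow_succ]
  ring

lemma hasDerivAt_kernel_succ (h : τ + ξ ≠ 0) :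
    HasDerivAt (kernel a ξ β (m + 1))
      ((β - 1) * kernel a ξ (β - 1) (m + 1) τ + (m + 1) * kernel a ξ β m τ
        - a * kernel a ξ β (m + 1) τ) τ := by
  have hshift : HasDerivAt (fun x : ℝ => (x + ξ) ^ (β - 1))
      (1 * (β - 1) * (τ + ξ) ^ (β - 1 - 1)) τ :=
    ((hasDerivAt_id τ).add_const ξ).rpow_const (Or.inl h)
  have hpow : HasDerivAt (fun x : ℝ => x ^ (m + 1)) ((m + 1) * τ ^ m) τ := by
    simpa using hasDerivAt_pow (m + 1) τ
  have hexp : HasDerivAt (fun x : ℝ => exp (-a * x)) (exp (-a * τ) * -a) τ := by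
    simpa using ((hasDerivAt_id τ).const_mul (-a)).exp
  refine ((hshift.mul hpow).mul hexp).congr_deriv ?_
  simp only [kernel, Pi.mul_apply]
  ring

lemma continuousWithinAt_kernel_succ_zero (hξ : 0 ≤ ξ) (h : 0 < (m : ℝ) + β ∨ 0 < ξ) :
    ContinuousWithinAt (kernel a ξ β (m + 1)) (Ici 0) 0 := by
  rcases hξ.eq_or_lt with rfl | hξ
  · have hmβ : 0 < (m : ℝ) + β := h.resolve_right (lt_irrefl 0)
    have hexp : 0 < ((m + 1 : ℕ) : ℝ) + β - 1 := by push_cast; linarith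
    rw [← continuousWithinAt_Ioi_iff_Ici]
    refine ContinuousWithinAt.congr
      (f := fun τ => τ ^ (((m + 1 : ℕ) : ℝ) + β - 1) * exp (-a * τ))
      ?_ (fun τ hτ => kernel_zero_shift hτ) ?_
    · exact ((continuousAt_rpow_const _ _ (Or.inr hexp.le)).mul (by fun_prop)).continuousWithinAt
    · simpa [kernel] using (zero_rpow hexp.ne').symm
  · exact (continuousAt_kernel (by simpa using hξ.ne')).continuousWithinAt

lemma integral_kernel_sub_one_succ (ha : 0 < a) (hξ : 0 ≤ ξ)
    (h : 0 < (m : ℝ) + β - 1 ∨ 0 < ξ) :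
    ∫ τ in Ioi 0, kernel a ξ (β - 1) (m + 1) τ =
      (∫ τ in Ioi 0, kernel a ξ β m τ) - ξ * ∫ τ in Ioi 0, kernel a ξ (β - 1) m τ := by
  have hβ := integrableOn_kernel (β := β) (m := m) ha hξ (h.imp (fun h => by linarith) id)
  have hβ' := integrableOn_kernel (β := β - 1) (m := m) ha hξ (h.imp (fun h => by linarith) id)
  rw [← integral_const_mul, ← integral_sub hβ (hβ'.const_mul ξ)]
  exact setIntegral_congr_fun measurableSet_Ioi fun τ hτ =>
    kernel_sub_one_succ (by linarith [mem_Ioi.mp hτ])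

lemma integral_deriv_kernel_succ (ha : 0 < a) (hξ : 0 ≤ ξ) (h : 0 < (m : ℝ) + β ∨ 0 < ξ) :
    (β - 1) * (∫ τ in Ioi 0, kernel a ξ (β - 1) (m + 1) τ)
      + (m + 1) * (∫ τ in Ioi 0, kernel a ξ β m τ)
      - a * (∫ τ in Ioi 0, kernel a ξ β (m + 1) τ) = 0 := by
  have h₁ := integrableOn_kernel (β := β - 1) (m := m + 1) ha hξ
    (by push_cast; convert h using 2; ring)
  have h₂ := integrableOn_kernel (β := β) (m := m) ha hξ h
  have h₃ := integrableOn_kernel (β := β) (m := m + 1) ha hξ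
    (h.imp (fun h => by push_cast; linarith) id)
  have hftc := integral_Ioi_of_hasDerivAt_of_tendsto (continuousWithinAt_kernel_succ_zero hξ h)
    (fun τ hτ => hasDerivAt_kernel_succ (by linarith [mem_Ioi.mp hτ]))
    (((h₁.const_mul _).add (h₂.const_mul _)).sub (h₃.const_mul _)) (tendsto_kernel_atTop ha)
  rw [integral_sub, integral_add, integral_const_mul, integral_const_mul,
    integral_const_mul] at hftc
  · simpa [kernel] using hftc
  · exact h₁.const_mul _
  · exact h₂.const_mul _
  · exact (h₁.const_mul _).add (h₂.const_mul _)
  · exact h₃.const_mul _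

theorem integral_kernel_succ (ha : 0 < a) (hξ : 0 ≤ ξ) (h : 0 < (m : ℝ) + β - 1 ∨ 0 < ξ) :
    a * ∫ τ in Ioi 0, kernel a ξ β (m + 1) τ =
      ((m : ℝ) + β) * (∫ τ in Ioi 0, kernel a ξ β m τ)
        + ξ * (1 - β) * ∫ τ in Ioi 0, kernel a ξ (β - 1) m τ := by
  have hparts := integral_deriv_kernel_succ ha hξ (h.imp (fun h => by linarith) id)
  rw [integral_kernel_sub_one_succ ha hξ h] at hparts
  linear_combination -hparts

end ShiftedGamma

theorem c_recurrence_general (a b ξ : ℝ) (ha : 0 < a) (hξ : 0 ≤ ξ) (n : ℕ)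
    (hconv : 0 < (n : ℝ) + b - 1 ∨ 0 < ξ)
    (c : ℕ → ℝ → ℝ)
    (hc : ∀ (m : ℕ) (β : ℝ), c m β =
      ∫ τ in Set.Ioi (0 : ℝ), (τ + ξ) ^ (β - 1) * τ ^ m * Real.exp (-a * τ)) :
    a * c (n + 1) b = ((n : ℝ) + b) * c n b + ξ * (1 - b) * c n (b - 1) := by
  simp only [hc]
  exact ShiftedGamma.integral_kernel_succ ha hξ hconv

/-- For `c_n(a,β) = ∫_0^∞ (τ+ξ)^(β-1) τ^n e^(-a τ) dτ`, the recurrence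
`a c_(n+1)(a,b) = (n+b) c_n(a,b) + ξ (1-b) c_n(a,b-1)` holds
(the identity requires `n + b - 1 > 0` or `ξ > 0` for the convergence of `c_n(a,b-1)`). -/
theorem c_recurrence (a b ξ : ℝ) (ha : 0 < a) (hb : 0 < b) (hξ : 0 ≤ ξ) (n : ℕ)
    (hconv : 0 < (n : ℝ) + b - 1 ∨ 0 < ξ)
    (c : ℕ → ℝ → ℝ)
    (hc : ∀ (m : ℕ) (β : ℝ), c m β =
      ∫ τ in Set.Ioi (0 : ℝ), (τ + ξ) ^ (β - 1) * τ ^ m * Real.exp (-a * τ)) :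
    a * c (n + 1) b = ((n : ℝ) + b) * c n b + ξ * (1 - b) * c n (b - 1) :=
  c_recurrence_general a b ξ ha hξ n hconv c hc
end

section
/- Let $a > 0$, $b \geq 1$, $\xi \geq 0$, and let $n$ be a non-negative integer. Then $a\, c_{n+1}(a,b) \leq (n+b)\, c_n(a,b)$, where $c_n(a,b) = \int_0^{+\infty} (\tau+\xi)^{b-1} \tau^n e^{-a\tau} \, d\tau$. -/
/-!
Integrating by parts the derivative of `(τ + ξ)^(b-1) τ^(n+1) e^(-aτ)`, whose boundary terms
vanish at `0` and at `∞`, gives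
`a c_(n+1) = (b - 1) ∫ (τ + ξ)^(b-2) τ^(n+1) e^(-aτ) + (n + 1) c_n`.
Since `τ ≤ τ + ξ`, the remaining integral is at most `c_n`, and `b - 1 ≥ 0`.
-/

open Real MeasureTheory Set Filter Topology

/-- `c_m(a, b)` is the integral of `shiftedGammaIntegrand ξ (b - 1) a m` over `(0, ∞)`. -/
noncomputable def shiftedGammaIntegrand (ξ p a : ℝ) (m : ℕ) (τ : ℝ) : ℝ :=
  (τ + ξ) ^ p * τ ^ m * exp (-a * τ)

namespace shiftedGammaIntegrand

variable {ξ p a : ℝ} {m : ℕ}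

lemma nonneg (hξ : 0 ≤ ξ) {τ : ℝ} (hτ : 0 ≤ τ) : 0 ≤ shiftedGammaIntegrand ξ p a m τ := by
  unfold shiftedGammaIntegrand; positivity

lemma continuous (hp : 0 ≤ p) : Continuous (shiftedGammaIntegrand ξ p a m) := by
  unfold shiftedGammaIntegrand
  fun_prop (disch := exact Or.inr hp)

lemma tendsto_atTop (ha : 0 < a) (hp : 0 ≤ p) :
    Tendsto (shiftedGammaIntegrand ξ p a m) atTop (𝓝 0) := by
  have hlim := (tendsto_rpow_mul_exp_neg_mul_atTop_nhds_zero (p + m) a ha).const_mul (2 ^ p)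
  rw [mul_zero] at hlim
  refine squeeze_zero' ?_ ?_ hlim
  · filter_upwards [eventually_ge_atTop |ξ|] with τ hτ
    have hτ0 : 0 ≤ τ := (abs_nonneg ξ).trans hτ
    have : 0 ≤ τ + ξ := by linarith [neg_abs_le ξ]
    unfold shiftedGammaIntegrand
    positivity
  · filter_upwards [eventually_ge_atTop |ξ|] with τ hτ
    have hτ0 : 0 ≤ τ := (abs_nonneg ξ).trans hτ
    calc shiftedGammaIntegrand ξ p a m τ ≤ (2 * τ) ^ p * τ ^ m * exp (-a * τ) := by
          unfold shiftedGammaIntegrand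
          gcongr
          · linarith [neg_abs_le ξ]
          · linarith [le_abs_self ξ]
      _ = 2 ^ p * (τ ^ (p + m) * exp (-a * τ)) := by
          rw [mul_rpow zero_le_two hτ0, rpow_add_of_nonneg hτ0 hp m.cast_nonneg, rpow_natCast]
          ring

lemma integrableOn (ha : 0 < a) (hp : 0 ≤ p) :
    IntegrableOn (shiftedGammaIntegrand ξ p a m) (Ioi 0) := by
  -- half of the exponential decay absorbs the factor `(τ + ξ)^p τ^m`
  refine integrable_of_isBigO_exp_neg (half_pos ha) (continuous hp).continuousOn ?_
  refine (((tendsto_atTop (ξ := ξ) (m := m) (half_pos ha) hp).isBigO_one ℝ).mul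
    (Asymptotics.isBigO_refl (fun τ ↦ exp (-(a / 2) * τ)) atTop)).congr (fun τ ↦ ?_)
    fun _ ↦ one_mul _
  simp only [shiftedGammaIntegrand, mul_assoc, ← exp_add]
  ring_nf

lemma sub_one_succ_le (hξ : 0 ≤ ξ) {τ : ℝ} (hτ : 0 < τ) :
    shiftedGammaIntegrand ξ (p - 1) a (m + 1) τ ≤ shiftedGammaIntegrand ξ p a m τ := by
  have hτξ : 0 < τ + ξ := by linarith
  calc shiftedGammaIntegrand ξ (p - 1) a (m + 1) τ
      = (τ + ξ) ^ (p - 1) * τ * τ ^ m * exp (-a * τ) := by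
        rw [shiftedGammaIntegrand, pow_succ]; ring
    _ ≤ (τ + ξ) ^ (p - 1) * (τ + ξ) * τ ^ m * exp (-a * τ) := by
        gcongr; linarith
    _ = shiftedGammaIntegrand ξ p a m τ := by
        rw [← rpow_add_one hτξ.ne', sub_add_cancel, shiftedGammaIntegrand]

lemma integrableOn_sub_one_succ (ha : 0 < a) (hξ : 0 ≤ ξ) (hp : 0 ≤ p) :
    IntegrableOn (shiftedGammaIntegrand ξ (p - 1) a (m + 1)) (Ioi 0) := by
  refine (integrableOn (ξ := ξ) (m := m) ha hp).mono' ?_ ?_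
  · unfold shiftedGammaIntegrand
    exact (by fun_prop : Measurable _).aestronglyMeasurable
  · filter_upwards [ae_restrict_mem measurableSet_Ioi] with τ (hτ : 0 < τ)
    rw [Real.norm_of_nonneg (nonneg hξ hτ.le)]
    exact sub_one_succ_le hξ hτ

lemma hasDerivAt_succ {τ : ℝ} (hτξ : τ + ξ ≠ 0) :
    HasDerivAt (shiftedGammaIntegrand ξ p a (m + 1))
      (p * shiftedGammaIntegrand ξ (p - 1) a (m + 1) τ + (m + 1) * shiftedGammaIntegrand ξ p a m τ
        - a * shiftedGammaIntegrand ξ p a (m + 1) τ) τ := by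
  have hbase := ((hasDerivAt_id τ).add_const ξ).rpow_const (p := p) (Or.inl hτξ)
  have hpow := hasDerivAt_pow (m + 1) τ
  have hexp := ((hasDerivAt_id τ).const_mul (-a)).exp
  refine ((hbase.mul hpow).mul hexp).congr_deriv ?_
  simp only [shiftedGammaIntegrand, id, Pi.mul_apply, Nat.cast_add, Nat.cast_one,
    add_tsub_cancel_right]
  ring

lemma mul_integral_succ (ha : 0 < a) (hξ : 0 ≤ ξ) (hp : 0 ≤ p) :
    a * ∫ τ in Ioi 0, shiftedGammaIntegrand ξ p a (m + 1) τ =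
      p * (∫ τ in Ioi 0, shiftedGammaIntegrand ξ (p - 1) a (m + 1) τ) +
        (m + 1) * ∫ τ in Ioi 0, shiftedGammaIntegrand ξ p a m τ := by
  have h₁ := (integrableOn_sub_one_succ (m := m) ha hξ hp).const_mul p
  have h₂ := (integrableOn (ξ := ξ) (m := m) ha hp).const_mul ((m : ℝ) + 1)
  have h₃ := (integrableOn (ξ := ξ) (m := m + 1) ha hp).const_mul a
  have h₁₂ : IntegrableOn (fun τ ↦ p * shiftedGammaIntegrand ξ (p - 1) a (m + 1) τ +
      (m + 1) * shiftedGammaIntegrand ξ p a m τ) (Ioi 0) := h₁.add h₂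
  have hftc := integral_Ioi_of_hasDerivAt_of_tendsto (continuous hp).continuousWithinAt
    (fun τ (hτ : 0 < τ) ↦ hasDerivAt_succ (by linarith)) ((h₁.add h₂).sub h₃) (tendsto_atTop ha hp)
  have hzero : shiftedGammaIntegrand ξ p a (m + 1) 0 = 0 := by simp [shiftedGammaIntegrand]
  rw [integral_sub h₁₂ h₃, integral_add h₁ h₂, integral_const_mul, integral_const_mul,
    integral_const_mul, hzero, sub_zero] at hftc
  linarith

end shiftedGammaIntegrand

/-- For `a > 0`, `b ≥ 1`, `ξ ≥ 0`: `a c_(n+1)(a,b) ≤ (n+b) c_n(a,b)`. -/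
theorem c_ineq_b_ge_one (a b ξ : ℝ) (ha : 0 < a) (hb : 1 ≤ b) (hξ : 0 ≤ ξ) (n : ℕ)
    (c : ℕ → ℝ)
    (hc : ∀ m : ℕ, c m =
      ∫ τ in Set.Ioi (0 : ℝ), (τ + ξ) ^ (b - 1) * τ ^ m * Real.exp (-a * τ)) :
    a * c (n + 1) ≤ ((n : ℝ) + b) * c n := by
  have hp : 0 ≤ b - 1 := by linarith
  have hc' : ∀ m, c m = ∫ τ in Ioi 0, shiftedGammaIntegrand ξ (b - 1) a m τ := hc
  have hJ : ∫ τ in Ioi 0, shiftedGammaIntegrand ξ (b - 1 - 1) a (n + 1) τ ≤ c n := by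
    rw [hc']
    exact setIntegral_mono_on (shiftedGammaIntegrand.integrableOn_sub_one_succ ha hξ hp)
      (shiftedGammaIntegrand.integrableOn ha hp) measurableSet_Ioi
      fun τ hτ ↦ shiftedGammaIntegrand.sub_one_succ_le hξ hτ
  calc a * c (n + 1) = (b - 1) * (∫ τ in Ioi 0, shiftedGammaIntegrand ξ (b - 1 - 1) a (n + 1) τ)
        + (n + 1) * c n := by
        rw [hc', hc', shiftedGammaIntegrand.mul_integral_succ ha hξ hp]
    _ ≤ (b - 1) * c n + (n + 1) * c n := by gcongr
    _ = (n + b) * c n := by ring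
end

section
/- Let $b > 0$ and let $N \geq 1$ be an integer. There exists a constant $C_N(b) > 0$, depending only on $N$ and $b$, such that for all real $\xi, t$ with $0 \leq \xi \leq t$, the Taylor remainder $r_N(t) = f(t) - \sum_{n=0}^{N-1} d_n (t - \xi)^n$ of $f(t) = \left(\frac{1-e^{-t}}{t}\right)^{b-1}$ at $\xi$ satisfies $|r_N(t)| \leq C_N(b)\, (t-\xi)^N$. -/
/-!
Write `f = g ^ (b - 1)` with `g t = (1 - e^{-t}) / t`, a real-analytic function with values in
`(0, 1]` on `[0, ∞)` and `g x ≥ (1 - e^{-1}) / x` for `x ≥ 1`. By Taylor's theorem with the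
Lagrange remainder it suffices to bound `f^{(N)}` on `[0, ∞)`. On `[0, 1]` this is continuity.
For `x ≥ 1`, Leibniz's rule gives `|g^{(i)}(x)| ≤ (i + 1)! / x^{i + 1}`, while the derivatives of
order `≤ n` of `u ↦ u ^ (b - 1)` at `g x` are `O(x^{n + 1 - b})`; the Faà di Bruno bound
`n! C D^n` with `D = (n + 1)! x^{-(1 + 1/n)}` then gives `f^{(n)}(x) = O(x^{-b})`.
-/

open Real Set Filter Topology
open scoped Nat

/-- `dslope` fills in the removable singularity of `(1 - e^{-t}) / t` at `0`, which makes
analyticity there immediate. -/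
noncomputable def oneSubExpNegDiv : ℝ → ℝ := dslope (fun t => 1 - exp (-t)) 0

lemma hasDerivAt_one_sub_exp_neg (x : ℝ) :
    HasDerivAt (fun t => 1 - exp (-t)) (exp (-x)) x := by
  simpa using ((hasDerivAt_neg x).exp).const_sub 1

lemma oneSubExpNegDiv_zero : oneSubExpNegDiv 0 = 1 := by
  simp [oneSubExpNegDiv, (hasDerivAt_one_sub_exp_neg 0).deriv]

lemma oneSubExpNegDiv_of_ne {t : ℝ} (ht : t ≠ 0) :
    oneSubExpNegDiv t = (1 - exp (-t)) / t := by
  simp [oneSubExpNegDiv, dslope_of_ne _ ht, slope_def_field]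

lemma oneSubExpNegDiv_pos (t : ℝ) : 0 < oneSubExpNegDiv t := by
  rcases lt_trichotomy t 0 with ht | rfl | ht
  · rw [oneSubExpNegDiv_of_ne ht.ne]
    exact div_pos_of_neg_of_neg (by simp [ht]) ht
  · simp [oneSubExpNegDiv_zero]
  · rw [oneSubExpNegDiv_of_ne ht.ne']
    exact div_pos (by simp [ht]) ht

lemma oneSubExpNegDiv_le_one {t : ℝ} (ht : 0 ≤ t) : oneSubExpNegDiv t ≤ 1 := by
  rcases ht.eq_or_lt with rfl | ht
  · rw [oneSubExpNegDiv_zero]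
  · rw [oneSubExpNegDiv_of_ne ht.ne', div_le_one ht]
    linarith [add_one_le_exp (-t)]

lemma div_le_oneSubExpNegDiv {x : ℝ} (hx : 1 ≤ x) :
    (1 - exp (-1)) / x ≤ oneSubExpNegDiv x := by
  rw [oneSubExpNegDiv_of_ne (by positivity)]
  gcongr

lemma analyticAt_oneSubExpNegDiv (x : ℝ) : AnalyticAt ℝ oneSubExpNegDiv x := by
  have h : ∀ y, AnalyticAt ℝ (fun t => 1 - exp (-t)) y := fun y => by fun_prop
  rcases eq_or_ne x 0 with rfl | hx
  · obtain ⟨p, hp⟩ := h 0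
    exact ⟨p.fslope, hp.has_fpower_series_dslope_fslope⟩
  · refine ((h x).div analyticAt_id hx).congr ?_
    filter_upwards [eventually_ne_nhds hx] with y hy
    exact (oneSubExpNegDiv_of_ne hy).symm

lemma contDiff_oneSubExpNegDiv {n : WithTop ℕ∞} : ContDiff ℝ n oneSubExpNegDiv :=
  contDiff_iff_contDiffAt.2 fun x => (analyticAt_oneSubExpNegDiv x).contDiffAt

lemma abs_iteratedDeriv_one_sub_exp_neg_le (j : ℕ) {x : ℝ} (hx : 0 < x) :
    |iteratedDeriv j (fun t => 1 - exp (-t)) x| ≤ j ! / x ^ j := by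
  rcases j.eq_zero_or_pos with rfl | hj
  · simp only [iteratedDeriv_zero, Nat.factorial_zero, Nat.cast_one, pow_zero, div_one]
    rw [abs_le]
    constructor <;> linarith [exp_pos (-x), exp_le_one_iff.2 (neg_nonpos.2 hx.le)]
  · rw [iteratedDeriv_const_sub hj, iteratedDeriv_neg, iteratedDeriv_comp_neg,
      iteratedDeriv_eq_iterate, iter_deriv_exp]
    simp only [abs_neg, smul_eq_mul, abs_mul, abs_pow, abs_neg, abs_one, one_pow, one_mul,
      abs_of_pos (exp_pos _)]
    rw [exp_neg, le_div_iff₀ (by positivity), inv_mul_le_iff₀ (exp_pos x)]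
    exact (div_le_iff₀ (by positivity)).1 (pow_div_factorial_le_exp _ hx.le j)

lemma abs_iteratedDeriv_inv {x : ℝ} (hx : 0 < x) (k : ℕ) :
    |iteratedDeriv k Inv.inv x| = k ! / x ^ (k + 1) := by
  rw [iteratedDeriv_eq_iterate, iter_deriv_inv, abs_mul, abs_mul, abs_pow, abs_neg, abs_one,
    one_pow, one_mul, Nat.abs_cast, abs_of_pos (zpow_pos hx _), div_eq_mul_inv,
    show (-1 - k : ℤ) = -((k + 1 : ℕ) : ℤ) by push_cast; ring, zpow_neg, zpow_natCast]

lemma abs_iteratedDeriv_oneSubExpNegDiv_le (i : ℕ) {x : ℝ} (hx : 0 < x) :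
    |iteratedDeriv i oneSubExpNegDiv x| ≤ (i + 1)! / x ^ (i + 1) := by
  have hloc : oneSubExpNegDiv =ᶠ[𝓝 x] (fun t => 1 - exp (-t)) * Inv.inv := by
    filter_upwards [eventually_ne_nhds hx.ne'] with t ht
    simp [oneSubExpNegDiv_of_ne ht, div_eq_mul_inv]
  rw [hloc.iteratedDeriv_eq, iteratedDeriv_mul (by fun_prop) (contDiffAt_inv ℝ hx.ne')]
  calc _ ≤ ∑ j ∈ Finset.range (i + 1),
        (i.choose j : ℝ) * (j ! / x ^ j) * ((i - j)! / x ^ (i - j + 1)) := by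
        refine (Finset.abs_sum_le_sum_abs _ _).trans (Finset.sum_le_sum fun j _ => ?_)
        rw [abs_mul, abs_mul, Nat.abs_cast, abs_iteratedDeriv_inv hx]
        gcongr
        exact abs_iteratedDeriv_one_sub_exp_neg_le j hx
    _ = ∑ j ∈ Finset.range (i + 1), (i ! / x ^ (i + 1) : ℝ) := by
        refine Finset.sum_congr rfl fun j hj => ?_
        have hji : j ≤ i := Nat.lt_succ_iff.1 (Finset.mem_range.1 hj)
        rw [← Nat.choose_mul_factorial_mul_factorial hji, show i + 1 = j + (i - j + 1) by omega,
          pow_add]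
        push_cast
        field_simp
        ring
    _ = _ := by
        rw [Finset.sum_const, Finset.card_range, nsmul_eq_mul, Nat.factorial_succ]
        push_cast
        ring

lemma rpow_le_rpow_add_one_of_mem_Icc {a y p : ℝ} (ha : 0 < a) (hy : y ∈ Icc a 1) :
    y ^ p ≤ a ^ p + 1 := by
  rcases le_total p 0 with hp | hp
  · linarith [rpow_le_rpow_of_nonpos ha hy.1 hp]
  · linarith [rpow_le_one (ha.le.trans hy.1) hy.2 hp, rpow_nonneg ha.le p]

lemma abs_iteratedDeriv_rpow_const_le {p y : ℝ} {i n : ℕ} (hy : y ∈ Ioc 0 1) (hi : i ≤ n) :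
    |iteratedDeriv i (fun u => u ^ p) y| ≤
      (∑ k ∈ Finset.range (n + 1), |(descPochhammer ℝ k).eval p|) * y ^ (p - n) := by
  rw [iteratedDeriv_eq_iterate, iter_deriv_rpow_const, abs_mul,
    abs_of_pos (rpow_pos_of_pos hy.1 _)]
  refine mul_le_mul ?_ (rpow_le_rpow_of_exponent_ge hy.1 hy.2 (by gcongr))
    (rpow_pos_of_pos hy.1 _).le (by positivity)
  exact Finset.single_le_sum (f := fun k => |(descPochhammer ℝ k).eval p|)
    (fun _ _ => abs_nonneg _) (Finset.mem_range_succ_iff.2 hi)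

lemma abs_iteratedDeriv_oneSubExpNegDiv_le_pow {n i : ℕ} {x : ℝ} (hx : 1 ≤ x) (hi : i ≤ n) :
    |iteratedDeriv i oneSubExpNegDiv x| ≤ ((n + 1)! * x ^ (-(1 + (n : ℝ)⁻¹))) ^ i := by
  have hx0 : 0 < x := one_pos.trans_le hx
  have hfac : (i + 1)! ≤ (n + 1)! ^ i := by
    rcases i.eq_zero_or_pos with rfl | hi0
    · simp
    · exact (Nat.factorial_le (by omega)).trans (Nat.le_self_pow hi0.ne' _)
  have hexp : -((i : ℝ) + 1) ≤ -(1 + (n : ℝ)⁻¹) * i := by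
    have : (i : ℝ) * (n : ℝ)⁻¹ ≤ 1 :=
      div_le_one_of_le₀ (by exact_mod_cast hi) n.cast_nonneg
    linarith
  calc |iteratedDeriv i oneSubExpNegDiv x|
      ≤ (i + 1)! / x ^ (i + 1) := abs_iteratedDeriv_oneSubExpNegDiv_le i hx0
    _ = (i + 1)! * x ^ (-((i : ℝ) + 1)) := by
        rw [rpow_neg hx0.le, ← div_eq_mul_inv]; norm_cast
    _ ≤ (n + 1)! ^ i * x ^ (-(1 + (n : ℝ)⁻¹) * i) := by
        gcongr
        exact_mod_cast hfac
    _ = _ := by rw [mul_pow, rpow_mul hx0.le, rpow_natCast]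

lemma exists_abs_iteratedDeriv_rpow_oneSubExpNegDiv_le_of_one_le {p : ℝ} (hp : -1 ≤ p) {n : ℕ}
    (hn : n ≠ 0) : ∃ M, ∀ x, 1 ≤ x →
      |iteratedDeriv n (fun t => oneSubExpNegDiv t ^ p) x| ≤ M := by
  set c := 1 - exp (-1)
  have hc : 0 < c := sub_pos.2 (exp_lt_one_iff.2 (by norm_num))
  set A := ∑ k ∈ Finset.range (n + 1), |(descPochhammer ℝ k).eval p|
  set K : ℝ := ↑(n + 1)!
  refine ⟨n ! * A * K ^ n * (c ^ (p - n) + 1), fun x hx => ?_⟩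
  have hx0 : 0 < x := one_pos.trans_le hx
  have hy : oneSubExpNegDiv x ∈ Icc (c / x) 1 :=
    ⟨div_le_oneSubExpNegDiv hx, oneSubExpNegDiv_le_one hx0.le⟩
  have hC : ∀ i ≤ n,
      ‖iteratedFDerivWithin ℝ i (fun u : ℝ => u ^ p) (Ioi 0) (oneSubExpNegDiv x)‖
        ≤ A * ((c / x) ^ (p - n) + 1) := fun i hi => by
    rw [iteratedFDerivWithin_of_isOpen i isOpen_Ioi (oneSubExpNegDiv_pos x),
      norm_iteratedFDeriv_eq_norm_iteratedDeriv, norm_eq_abs]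
    exact (abs_iteratedDeriv_rpow_const_le ⟨oneSubExpNegDiv_pos x, hy.2⟩ hi).trans
      (mul_le_mul_of_nonneg_left (rpow_le_rpow_add_one_of_mem_Icc (by positivity) hy)
        (by positivity))
  have hD : ∀ i, 1 ≤ i → i ≤ n → ‖iteratedFDeriv ℝ i oneSubExpNegDiv x‖
      ≤ (K * x ^ (-(1 + (n : ℝ)⁻¹))) ^ i := fun i _ hi => by
    rw [norm_iteratedFDeriv_eq_norm_iteratedDeriv, norm_eq_abs]
    exact abs_iteratedDeriv_oneSubExpNegDiv_le_pow hx hi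
  have hcomp := norm_iteratedFDeriv_comp_le' (range_subset_iff.2 oneSubExpNegDiv_pos)
    isOpen_Ioi.uniqueDiffOn
    (fun u hu => (contDiffAt_rpow_const_of_ne (ne_of_gt hu)).contDiffWithinAt)
    contDiff_oneSubExpNegDiv le_rfl x hC hD
  rw [← norm_eq_abs, ← norm_iteratedFDeriv_eq_norm_iteratedDeriv]
  refine hcomp.trans ?_
  have hDn : (K * x ^ (-(1 + (n : ℝ)⁻¹))) ^ n = K ^ n * x ^ (-((n : ℝ) + 1)) := by
    rw [mul_pow, ← rpow_natCast (x ^ _) n, ← rpow_mul hx0.le]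
    congr 2
    field_simp
  have h1 : (c / x) ^ (p - n) * x ^ (-((n : ℝ) + 1)) ≤ c ^ (p - n) := by
    rw [div_rpow hc.le hx0.le, div_eq_mul_inv, ← rpow_neg hx0.le, mul_assoc, ← rpow_add hx0]
    exact mul_le_of_le_one_right (by positivity)
      (rpow_le_one_of_one_le_of_nonpos hx (by linarith))
  have h2 : x ^ (-((n : ℝ) + 1)) ≤ 1 := rpow_le_one_of_one_le_of_nonpos hx (by linarith)
  calc n ! * (A * ((c / x) ^ (p - n) + 1)) * (K * x ^ (-(1 + (n : ℝ)⁻¹))) ^ n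
      = n ! * A * K ^ n *
          ((c / x) ^ (p - n) * x ^ (-((n : ℝ) + 1)) + x ^ (-((n : ℝ) + 1))) := by
        rw [hDn]; ring
    _ ≤ n ! * A * K ^ n * (c ^ (p - n) + 1) := by gcongr

lemma contDiff_rpow_oneSubExpNegDiv (p : ℝ) {m : WithTop ℕ∞} :
    ContDiff ℝ m (fun t => oneSubExpNegDiv t ^ p) :=
  contDiff_oneSubExpNegDiv.rpow_const_of_ne fun t => (oneSubExpNegDiv_pos t).ne'

lemma exists_abs_iteratedDeriv_rpow_oneSubExpNegDiv_le {p : ℝ} (hp : -1 ≤ p) {n : ℕ}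
    (hn : n ≠ 0) : ∃ M, ∀ x, 0 ≤ x →
      |iteratedDeriv n (fun t => oneSubExpNegDiv t ^ p) x| ≤ M := by
  obtain ⟨M₀, hM₀⟩ := (isCompact_Icc (a := (0 : ℝ)) (b := 1)).exists_bound_of_continuousOn
    ((contDiff_rpow_oneSubExpNegDiv p).continuous_iteratedDeriv n le_rfl).continuousOn
  obtain ⟨M₁, hM₁⟩ := exists_abs_iteratedDeriv_rpow_oneSubExpNegDiv_le_of_one_le hp hn
  refine ⟨max M₀ M₁, fun x hx => ?_⟩
  rcases le_total x 1 with hx1 | hx1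
  · exact (hM₀ x ⟨hx, hx1⟩).trans (le_max_left _ _)
  · exact (hM₁ x hx1).trans (le_max_right _ _)

lemma abs_sub_sum_taylor_le {F : ℝ → ℝ} {n : ℕ} (hF : ContDiff ℝ (n + 1) F) {ξ t M : ℝ}
    (hξt : ξ ≤ t) (hM : ∀ y ∈ Icc ξ t, |iteratedDeriv (n + 1) F y| ≤ M) :
    |F t - ∑ k ∈ Finset.range (n + 1), iteratedDeriv k F ξ / k ! * (t - ξ) ^ k|
      ≤ M / (n + 1)! * (t - ξ) ^ (n + 1) := by
  rcases hξt.eq_or_lt with rfl | hlt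
  · simp [Finset.sum_range_succ']
  have htaylor : taylorWithinEval F n (uIcc ξ t) ξ t
      = ∑ k ∈ Finset.range (n + 1), iteratedDeriv k F ξ / k ! * (t - ξ) ^ k := by
    rw [taylor_within_apply]
    refine Finset.sum_congr rfl fun k hk => ?_
    rw [iteratedDerivWithin_eq_iteratedDeriv (uniqueDiffOn_uIcc hlt.ne)
      (hF.contDiffAt.of_le (by exact_mod_cast Finset.mem_range_succ_iff.1 hk |>.trans n.le_succ))
      left_mem_uIcc, smul_eq_mul]
    ring
  obtain ⟨y, hy, hrem⟩ := taylor_mean_remainder_lagrange_iteratedDeriv hlt.ne hF.contDiffOn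
  rw [uIoo_of_le hξt] at hy
  rw [← htaylor, hrem, abs_div, abs_mul, abs_of_nonneg (pow_nonneg (sub_nonneg.2 hξt) _),
    Nat.abs_cast, div_mul_eq_mul_div M]
  gcongr
  exact hM y (Ioo_subset_Icc_self hy)

/-- Uniform bound for the Taylor remainder: for `b > 0` and `N ≥ 1` there is a constant
`C_N(b) > 0` such that for all `0 ≤ ξ ≤ t`,
`|f(t) - ∑_{n<N} d_n(ξ) (t-ξ)^n| ≤ C_N(b) (t-ξ)^N`,
where `f(t) = ((1 - e^(-t))/t)^(b-1)` (with `f(0) = 1`). -/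
theorem taylor_remainder_bound (b : ℝ) (hb : 0 < b) (N : ℕ) (hN : 1 ≤ N)
    (f : ℝ → ℝ)
    (hf : ∀ t : ℝ, f t = if t = 0 then 1 else ((1 - Real.exp (-t)) / t) ^ (b - 1)) :
    ∃ C : ℝ, 0 < C ∧ ∀ ξ t : ℝ, 0 ≤ ξ → ξ ≤ t →
      |f t - ∑ n ∈ Finset.range N,
          (iteratedDeriv n f ξ / (Nat.factorial n : ℝ)) * (t - ξ) ^ n|
        ≤ C * (t - ξ) ^ N := by
  have hfg : f = fun t => oneSubExpNegDiv t ^ (b - 1) := by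
    funext t
    rcases eq_or_ne t 0 with rfl | ht
    · simp [hf, oneSubExpNegDiv_zero]
    · simp [hf, ht, oneSubExpNegDiv_of_ne ht]
  subst hfg
  obtain ⟨n, rfl⟩ : ∃ n, N = n + 1 := ⟨N - 1, by omega⟩
  obtain ⟨M, hM⟩ :=
    exists_abs_iteratedDeriv_rpow_oneSubExpNegDiv_le (p := b - 1) (by linarith) n.succ_ne_zero
  have hM0 : 0 ≤ M := (abs_nonneg _).trans (hM 0 le_rfl)
  refine ⟨M / (n + 1)! + 1, by positivity, fun ξ t hξ hξt => ?_⟩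
  calc _ ≤ M / (n + 1)! * (t - ξ) ^ (n + 1) :=
        abs_sub_sum_taylor_le (contDiff_rpow_oneSubExpNegDiv _) hξt
          fun y hy => hM y (hξ.trans hy.1)
    _ ≤ (M / (n + 1)! + 1) * (t - ξ) ^ (n + 1) := by
        gcongr
        linarith
end
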